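/- Let ρ_AB be a pure bipartite density operator on a finite-dimensional Hilbert space A⊗B. Then V(ρ_AB ‖ I_A ⊗ ρ_B) = V(A)_ρ, where V(A)_ρ = Tr(ρ_A (log ρ_A)²) − (−Tr(ρ_A log ρ_A))² is the varentropy of the reduced state ρ_A. -/

import Mathlib

open Matrix Filter
open scoped ComplexOrder Classical Kronecker

variable {n : Type*} [Fintype n] [DecidableEq n]

/-- Square root of a positive semidefinite matrix (0 if not PSD). -/
noncomputable def msqrt (A : Matrix n n ℂ) : Matrix n n ℂ :=
  if h : A.PosSemidef then (h.1.eigenvectorUnitary : Matrix n n ℂ) *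
    diagonal ((↑) ∘ (√·) ∘ h.1.eigenvalues) * (star (h.1.eigenvectorUnitary : Matrix n n ℂ)) else 0

/-- Trace norm ‖A‖₁ = Tr √(AᴴA). -/
noncomputable def traceNorm (A : Matrix n n ℂ) : ℝ :=
  ((msqrt (Aᴴ * A)).trace).re

/-- Fidelity F(ρ,σ) = ‖√ρ √σ‖₁. -/
noncomputable def fidelity (ρ σ : Matrix n n ℂ) : ℝ :=
  traceNorm (msqrt ρ * msqrt σ)

/-- Purified distance for normalized states. -/
noncomputable def purifiedDist (ρ σ : Matrix n n ℂ) : ℝ :=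
  Real.sqrt (1 - (fidelity ρ σ) ^ 2)

/-- Density operator predicate. -/
def IsDensity (ρ : Matrix n n ℂ) : Prop := ρ.PosSemidef ∧ ρ.trace = 1

/-- Subnormalized state predicate. -/
def IsSubnormalized (ρ : Matrix n n ℂ) : Prop := ρ.PosSemidef ∧ ρ.trace.re ≤ 1

/-- Generalized fidelity for subnormalized states. -/
noncomputable def genFidelity (ρ σ : Matrix n n ℂ) : ℝ :=
  traceNorm (msqrt ρ * msqrt σ) + Real.sqrt ((1 - ρ.trace.re) * (1 - σ.trace.re))

/-- Purified distance via the generalized fidelity. -/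
noncomputable def purifiedDistG (ρ σ : Matrix n n ℂ) : ℝ :=
  Real.sqrt (1 - (genFidelity ρ σ) ^ 2)

/-- Max-relative entropy (base 2). -/
noncomputable def Dmax (ρ σ : Matrix n n ℂ) : ℝ :=
  sInf {l : ℝ | ((2:ℝ) ^ l • σ - ρ).PosSemidef}

/-- Min-relative entropy (base 2). -/
noncomputable def Dmin (ρ σ : Matrix n n ℂ) : ℝ :=
  -Real.logb 2 ((fidelity ρ σ) ^ 2)

/-- ε-ball of subnormalized states around ρ in purified distance. -/
def epsBall (ε : ℝ) (ρ : Matrix n n ℂ) : Set (Matrix n n ℂ) :=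
  {ρ' | IsSubnormalized ρ' ∧ purifiedDistG ρ ρ' ≤ ε}

/-- Matrix logarithm via the hermitian functional calculus (0 if not Hermitian). -/
noncomputable def mlog (A : Matrix n n ℂ) : Matrix n n ℂ :=
  if h : A.IsHermitian then h.cfc Real.log else 0

/-- Quantum relative entropy D(ρ‖σ) = Tr ρ(log ρ − log σ). -/
noncomputable def relEnt (ρ σ : Matrix n n ℂ) : ℝ :=
  ((ρ * (mlog ρ - mlog σ)).trace).re

/-- Relative entropy variance V(ρ‖σ). -/
noncomputable def relVar (ρ σ : Matrix n n ℂ) : ℝ :=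
  ((ρ * (mlog ρ - mlog σ) ^ 2).trace).re - (relEnt ρ σ) ^ 2

/-- Varentropy V(A)_ρ = Tr(ρ (log ρ)²) − (Tr ρ log ρ)². -/
noncomputable def varentropy (ρ : Matrix n n ℂ) : ℝ :=
  ((ρ * (mlog ρ) ^ 2).trace).re - (((ρ * mlog ρ).trace).re) ^ 2

/-- Partial trace over the second (B) register. -/
noncomputable def ptraceB {A B : Type*} [Fintype A] [Fintype B]
    (M : Matrix (A × B) (A × B) ℂ) : Matrix A A ℂ :=
  Matrix.of fun a a' => ∑ b, M (a, b) (a', b)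

/-- Partial trace over the first (A) register. -/
noncomputable def ptraceA {A B : Type*} [Fintype A] [Fintype B]
    (M : Matrix (A × B) (A × B) ℂ) : Matrix B B ℂ :=
  Matrix.of fun b b' => ∑ a, M (a, b) (a, b')


/-!
A pure state `ρ = v v*` of trace one is a projection, so with the convention `Real.log 0 = 0` its
matrix logarithm vanishes; together with `log (I ⊗ ρ_B) = I ⊗ log ρ_B` this turns
`V(ρ ‖ I ⊗ ρ_B)` into the varentropy of `ρ_B`. Writing `v` as a coefficient matrix `C`, one has
`ρ_A = C Cᴴ` and `ρ_B = (Cᴴ C)ᵀ`, so all traces of positive powers of `ρ_A` and `ρ_B` agree.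
Interpolating `f` by a polynomial on both spectra and at `0` then gives `Tr f(ρ_A) = Tr f(ρ_B)`
whenever `f 0 = 0`, in particular for `f x = x (log x)^k`.
-/

lemma Matrix.continuousOn_spectrum (A : Matrix n n ℂ) (f : ℝ → ℝ) :
    ContinuousOn f (spectrum ℝ A) :=
  A.finite_real_spectrum.continuousOn f

lemma mlog_eq_cfc {A : Matrix n n ℂ} (hA : A.IsHermitian) : mlog A = cfc Real.log A := by
  rw [mlog, dif_pos hA, hA.cfc_eq]

lemma mlog_eq_zero_of_isIdempotentElem {A : Matrix n n ℂ} (hA : A.IsHermitian)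
    (hidem : IsIdempotentElem A) : mlog A = 0 := by
  have hspec : spectrum ℝ A ⊆ {0, 1} :=
    (isIdempotentElem_iff_spectrum_subset ℝ A hA.isSelfAdjoint).1 hidem
  rw [mlog_eq_cfc hA, ← cfc_zero ℝ A]
  refine cfc_congr fun x hx => ?_
  rcases hspec hx with rfl | rfl <;> simp

lemma mul_mlog_pow {A : Matrix n n ℂ} (hA : A.IsHermitian) (k : ℕ) :
    A * mlog A ^ k = cfc (fun x => x * Real.log x ^ k) A := by
  have hc := A.continuousOn_spectrum
  rw [mlog_eq_cfc hA, ← cfc_pow _ _ _ (hc _) hA.isSelfAdjoint, cfc_mul _ _ _ (hc _) (hc _),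
    cfc_id' ℝ A]

open Polynomial in
lemma Set.Finite.exists_polynomial_eval_eq {s : Set ℝ} (hs : s.Finite) (f : ℝ → ℝ) :
    ∃ p : ℝ[X], ∀ x ∈ s, p.eval x = f x :=
  ⟨Lagrange.interpolate hs.toFinset id f, fun _ hx =>
    Lagrange.eval_interpolate_at_node f (Set.injOn_id _) (hs.mem_toFinset.2 hx)⟩

section
variable {m : Type*} [Fintype m] [DecidableEq m]

def Matrix.oneKroneckerStarAlgHom : Matrix n n ℂ →⋆ₐ[ℂ] Matrix (m × n) (m × n) ℂ where
  toFun X := (1 : Matrix m m ℂ) ⊗ₖ X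
  map_one' := one_kronecker_one
  map_mul' X Y := by rw [← mul_kronecker_mul, one_mul]
  map_zero' := kronecker_zero _
  map_add' := kronecker_add _
  commutes' c := by simp [Algebra.algebraMap_eq_smul_one, kronecker_smul]
  map_star' X := by simp [star_eq_conjTranspose, conjTranspose_kronecker]

lemma mlog_one_kronecker {σ : Matrix n n ℂ} (hσ : σ.IsHermitian) :
    mlog ((1 : Matrix m m ℂ) ⊗ₖ σ) = (1 : Matrix m m ℂ) ⊗ₖ mlog σ := by
  let φ : Matrix n n ℂ →⋆ₐ[ℂ] Matrix (m × n) (m × n) ℂ := oneKroneckerStarAlgHom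
  have hφσ : (φ σ).IsHermitian := hσ.isSelfAdjoint.map φ
  change mlog (φ σ) = φ (mlog σ)
  rw [mlog_eq_cfc hσ, mlog_eq_cfc hφσ]
  exact (φ.map_cfc Real.log σ (σ.continuousOn_spectrum _)
    (LinearMap.continuous_of_finiteDimensional φ.toLinearMap) hσ.isSelfAdjoint
    hφσ.isSelfAdjoint).symm

open Polynomial in
lemma Matrix.trace_aeval_eq_of_trace_pow_succ_eq {M : Matrix m m ℂ} {N : Matrix n n ℂ}
    (h : ∀ k, (M ^ (k + 1)).trace = (N ^ (k + 1)).trace) {p : ℝ[X]} (hp : p.coeff 0 = 0) :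
    (aeval M p).trace = (aeval N p).trace := by
  simp only [aeval_eq_sum_range, trace_sum, trace_smul]
  refine Finset.sum_congr rfl fun k _ => ?_
  cases k with
  | zero => simp [hp]
  | succ k => rw [h k]

lemma Matrix.trace_cfc_eq_of_trace_pow_succ_eq {M : Matrix m m ℂ} {N : Matrix n n ℂ}
    (hM : M.IsHermitian) (hN : N.IsHermitian)
    (h : ∀ k, (M ^ (k + 1)).trace = (N ^ (k + 1)).trace) {f : ℝ → ℝ} (hf : f 0 = 0) :
    (cfc f M).trace = (cfc f N).trace := by
  obtain ⟨p, hp⟩ :=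
    ((M.finite_real_spectrum.union N.finite_real_spectrum).insert 0).exists_polynomial_eval_eq f
  have hpM : cfc f M = Polynomial.aeval M p := by
    rw [← cfc_polynomial p M hM.isSelfAdjoint]
    exact cfc_congr fun x hx => (hp x (.inr (.inl hx))).symm
  have hpN : cfc f N = Polynomial.aeval N p := by
    rw [← cfc_polynomial p N hN.isSelfAdjoint]
    exact cfc_congr fun x hx => (hp x (.inr (.inr hx))).symm
  rw [hpM, hpN]
  refine trace_aeval_eq_of_trace_pow_succ_eq h ?_
  rw [Polynomial.coeff_zero_eq_eval_zero, hp 0 (.inl rfl), hf]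

lemma varentropy_eq_of_trace_pow_succ_eq {M : Matrix m m ℂ} {N : Matrix n n ℂ}
    (hM : M.IsHermitian) (hN : N.IsHermitian)
    (h : ∀ k, (M ^ (k + 1)).trace = (N ^ (k + 1)).trace) : varentropy M = varentropy N := by
  have key (k : ℕ) : (M * mlog M ^ k).trace = (N * mlog N ^ k).trace := by
    rw [mul_mlog_pow hM, mul_mlog_pow hN]
    exact trace_cfc_eq_of_trace_pow_succ_eq hM hN h (by simp)
  rw [varentropy, varentropy, key 2, ← pow_one (mlog M), ← pow_one (mlog N), key 1]

lemma Matrix.mul_pow_mul (M : Matrix m n ℂ) (N : Matrix n m ℂ) (k : ℕ) :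
    (M * N) ^ k * M = M * (N * M) ^ k := by
  induction k with
  | zero => simp
  | succ k ih => calc
      (M * N) ^ (k + 1) * M = (M * N) ^ k * M * N * M := by
        simp only [pow_succ, Matrix.mul_assoc]
      _ = M * (N * M) ^ (k + 1) := by simp only [ih, pow_succ, Matrix.mul_assoc]

lemma Matrix.trace_mul_pow_succ_comm (M : Matrix m n ℂ) (N : Matrix n m ℂ) (k : ℕ) :
    ((M * N) ^ (k + 1)).trace = ((N * M) ^ (k + 1)).trace := by
  rw [pow_succ, ← Matrix.mul_assoc, Matrix.mul_pow_mul, Matrix.mul_assoc, trace_mul_comm,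
    Matrix.mul_assoc, ← pow_succ]

lemma trace_mul_one_kronecker {n : Type*} [Fintype n] (ρ : Matrix (m × n) (m × n) ℂ)
    (X : Matrix n n ℂ) :
    (ρ * ((1 : Matrix m m ℂ) ⊗ₖ X)).trace = (ptraceA ρ * X).trace := by
  simp only [trace, diag_apply, mul_apply, kroneckerMap_apply, one_apply, ite_mul, one_mul,
    zero_mul, mul_ite, mul_zero, Fintype.sum_prod_type, Finset.sum_ite_irrel, Finset.sum_const_zero,
    Finset.sum_ite_eq', Finset.mem_univ, ↓reduceIte, ptraceA, of_apply, Finset.sum_mul]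
  rw [Finset.sum_comm]
  exact Finset.sum_congr rfl fun _ _ => Finset.sum_comm

lemma relVar_one_kronecker_ptraceA {ρ : Matrix (m × n) (m × n) ℂ} (hρ : mlog ρ = 0)
    (hσ : (ptraceA ρ).IsHermitian) :
    relVar ρ ((1 : Matrix m m ℂ) ⊗ₖ ptraceA ρ) = varentropy (ptraceA ρ) := by
  have hsq : ((1 : Matrix m m ℂ) ⊗ₖ mlog (ptraceA ρ)) ^ 2 = 1 ⊗ₖ (mlog (ptraceA ρ) ^ 2) := by
    rw [sq, sq, ← mul_kronecker_mul, one_mul]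
  rw [relVar, relEnt, varentropy, hρ, mlog_one_kronecker hσ, zero_sub, neg_sq, hsq,
    Matrix.mul_neg, trace_neg, trace_mul_one_kronecker, trace_mul_one_kronecker, Complex.neg_re,
    neg_sq]

end

lemma Matrix.isIdempotentElem_vecMulVec_star {m : Type*} [Fintype m] {v : m → ℂ}
    (hv : (vecMulVec v (star v)).trace = 1) : IsIdempotentElem (vecMulVec v (star v)) := by
  rw [trace_vecMulVec, dotProduct_comm] at hv
  rw [IsIdempotentElem, vecMulVec_mul_vecMulVec, hv, one_smul]

section
variable {m n : Type*} [Fintype m] [Fintype n]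

lemma ptraceB_vecMulVec_star (v : m × n → ℂ) :
    ptraceB (vecMulVec v (star v)) = of (Function.curry v) * (of (Function.curry v))ᴴ := by
  ext a a'
  simp [ptraceB, mul_apply, vecMulVec_apply]

lemma ptraceA_vecMulVec_star (v : m × n → ℂ) :
    ptraceA (vecMulVec v (star v)) = ((of (Function.curry v))ᴴ * of (Function.curry v))ᵀ := by
  ext b b'
  simp [ptraceA, mul_apply, vecMulVec_apply, mul_comm]

end

theorem stmt_7 {A B : Type*} [Fintype A] [DecidableEq A] [Fintype B] [DecidableEq B]
    (ρ : Matrix (A × B) (A × B) ℂ) (hρ : IsDensity ρ)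
    (hpure : ∃ v : A × B → ℂ, ρ = Matrix.vecMulVec v (star v)) :
    relVar ρ ((1 : Matrix A A ℂ) ⊗ₖ ptraceA ρ) = varentropy (ptraceB ρ) := by
  obtain ⟨v, rfl⟩ := hpure
  set C : Matrix A B ℂ := of (Function.curry v)
  have hlog : mlog (vecMulVec v (star v)) = 0 :=
    mlog_eq_zero_of_isIdempotentElem hρ.1.1 (isIdempotentElem_vecMulVec_star hρ.2)
  rw [relVar_one_kronecker_ptraceA hlog, ptraceA_vecMulVec_star, ptraceB_vecMulVec_star]
  · refine varentropy_eq_of_trace_pow_succ_eq (isHermitian_conjTranspose_mul_self C).transpose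
      (isHermitian_mul_conjTranspose_self C) fun k => ?_
    rw [← transpose_pow, trace_transpose, trace_mul_pow_succ_comm]
  · rw [ptraceA_vecMulVec_star]
    exact (isHermitian_conjTranspose_mul_self C).transpose
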